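/- For an ascent sequence s of length n with max(s) < n, removing the entry at position max(s)+1 (the entry ealm(s) immediately following the last maximal entry), under the assumption s_{max(s)+2} ≤ ealm(s), yields an ascent sequence s* of length n−1 with asc(s*) = asc(s), max(s*) = max(s), rmin(s*) = rmin(s), rep(s*) = rep(s) − 1, and zero(s*) = zero(s) − 1 if ealm(s) = 0, zero(s*) = zero(s) otherwise. -/

import Mathlib

/-- Number of ascents of a sequence (0-indexed list). -/
def ascStat (s : List ℕ) : ℕ :=
  (List.range (s.length - 1)).countP (fun i => decide (s.getD i 0 < s.getD (i+1) 0))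

/-- Number of repeated entries. -/
def repStat (s : List ℕ) : ℕ := s.length - s.dedup.length

/-- Number of zero entries. -/
def zeroStat (s : List ℕ) : ℕ := s.count 0

/-- Number of maximal entries: positions (0-indexed) i with s_i = i. -/
def maxStat (s : List ℕ) : ℕ :=
  (List.range s.length).countP (fun i => decide (s.getD i 0 = i))

/-- Number of right-to-left minima. -/
def rminStat (s : List ℕ) : ℕ :=
  (List.range s.length).countP
    (fun i => decide (∀ j < s.length, i < j → s.getD i 0 < s.getD j 0))

/-- Inversion sequence: 0-indexed, s_i ≤ i (i.e. 1-indexed 0 ≤ s_i < i). -/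
def IsInvSeq (s : List ℕ) : Prop := ∀ i < s.length, s.getD i 0 ≤ i

/-- Ascent sequence: s_0 = 0 and s_i ≤ asc(s_0,…,s_{i-1}) + 1. -/
def IsAscSeq (s : List ℕ) : Prop :=
  ∀ i < s.length, s.getD i 0 ≤ if i = 0 then 0 else ascStat (s.take i) + 1

/-!
The maximal entries of an ascent sequence form an initial segment: if `sᵢ = i` then
`asc(s₀ … sᵢ₋₁) = i - 1`, so this prefix increases strictly from `s₀ = 0` and equals
`0, 1, …, i - 1`. Hence `s = [0, …, m - 1] ++ e :: f :: b` with `m = max(s)`, `e < m`, and `f ≤ e`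
by hypothesis. Since `m - 1 ≥ e ≥ f`, deleting `e` neither creates nor destroys an ascent, so every
later entry keeps its bound and `asc` is unchanged. The entry `e` is no right-to-left minimum, and
no earlier entry stops being one, because `f ≤ e` follows it; and `e < m` repeats a prefix value.
-/

theorem ascStat_cons_cons (x y : ℕ) (l : List ℕ) :
    ascStat (x :: y :: l) = (if x < y then 1 else 0) + ascStat (y :: l) := by
  unfold ascStat
  simp only [List.length_cons, Nat.add_sub_cancel, List.range_succ_eq_map, List.countP_cons,
    List.countP_map]
  simp only [Function.comp_def, Nat.succ_eq_add_one, List.getD_cons_succ, List.getD_cons_zero]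
  split_ifs <;> simp_all [add_comm]

theorem ascStat_le (l : List ℕ) : ascStat l ≤ l.length - 1 :=
  List.countP_le_length.trans_eq (List.length_range ..)

theorem ascStat_append_cons_cons_of_le {x y : ℕ} (u v : List ℕ) (hyx : y ≤ x)
    (hxu : ∀ a ∈ u.getLast?, x ≤ a) : ascStat (u ++ x :: y :: v) = ascStat (u ++ y :: v) := by
  induction u with
  | nil => simp [ascStat_cons_cons, hyx.not_gt]
  | cons a u ih =>
    cases u with
    | nil =>
      have hxa : x ≤ a := hxu a rfl
      simp [ascStat_cons_cons, hyx.not_gt, (hyx.trans hxa).not_gt, hxa.not_gt]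
    | cons c u =>
      simp only [List.cons_append, ascStat_cons_cons] at ih ⊢
      rw [ih fun b hb => hxu b (by simpa using hb)]

theorem le_getD_of_ascStat_eq {l : List ℕ} (hl : ascStat l + 1 = l.length) :
    ∀ j < l.length, l.getD 0 0 + j ≤ l.getD j 0 := by
  induction l with
  | nil => simp
  | cons x l ih =>
    cases l with
    | nil => simp
    | cons y l =>
      have hle := ascStat_le (y :: l)
      rw [ascStat_cons_cons] at hl
      simp only [List.length_cons] at hl hle
      have hxy : x < y := by by_contra hxy; rw [if_neg hxy] at hl; omega
      rw [if_pos hxy] at hl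
      intro j hj
      cases j with
      | zero => simp
      | succ j =>
        have := ih (by simp only [List.length_cons]; omega) j (by simpa using hj)
        simp only [List.getD_cons_succ, List.getD_cons_zero] at this ⊢
        omega

theorem rminStat_cons (x : ℕ) (l : List ℕ) :
    rminStat (x :: l) = (if ∀ y ∈ l, x < y then 1 else 0) + rminStat l := by
  unfold rminStat
  simp only [List.length_cons, List.range_succ_eq_map, List.countP_cons, List.countP_map]
  have head : (∀ j < l.length + 1, 0 < j → x < (x :: l).getD j 0) ↔ ∀ y ∈ l, x < y := by
    rw [List.forall_mem_iff_getElem]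
    constructor
    · intro H i hi
      have := H (i + 1) (by omega) (by omega)
      rwa [List.getD_cons_succ, List.getD_eq_getElem _ _ hi] at this
    · rintro H (_ | j) hj hpos
      · omega
      · rw [List.getD_cons_succ, List.getD_eq_getElem _ _ (by omega)]
        exact H j (by omega)
  have tail (i : ℕ) : (∀ j < l.length + 1, i + 1 < j → (x :: l).getD (i + 1) 0 < (x :: l).getD j 0)
      ↔ ∀ j < l.length, i < j → l.getD i 0 < l.getD j 0 := by
    constructor
    · intro H j hj hij
      simpa only [List.getD_cons_succ] using H (j + 1) (by omega) (by omega)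
    · rintro H (_ | j) hj hij
      · omega
      · simpa only [List.getD_cons_succ] using H j (by omega) (by omega)
  simp only [List.getD_cons_zero, head, decide_eq_true_eq, add_comm (List.countP _ _)]
  congr 1
  exact List.countP_congr fun i _ => by simp only [Function.comp_apply, Nat.succ_eq_add_one, tail]

theorem rminStat_append_cons_cons_of_le {x y : ℕ} (u v : List ℕ) (hyx : y ≤ x) :
    rminStat (u ++ x :: y :: v) = rminStat (u ++ y :: v) := by
  induction u with
  | nil => simp [rminStat_cons x, hyx.not_gt]
  | cons a u ih =>
    have hmem : (∀ z ∈ u ++ x :: y :: v, a < z) ↔ ∀ z ∈ u ++ y :: v, a < z := by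
      simp only [List.mem_append, List.mem_cons]
      exact ⟨fun H z hz => H z (by tauto), fun H z hz => by
        rcases hz with hz | rfl | hz
        · exact H z (by tauto)
        · exact (H y (by tauto)).trans_le hyx
        · exact H z (by tauto)⟩
    simp only [List.cons_append, rminStat_cons a, hmem, ih]

theorem repStat_append_cons_of_mem {x : ℕ} {l₁ l₂ : List ℕ} (hx : x ∈ l₁ ++ l₂) :
    repStat (l₁ ++ x :: l₂) = repStat (l₁ ++ l₂) + 1 := by
  have hdedup : (l₁ ++ x :: l₂).dedup.length = (l₁ ++ l₂).dedup.length := by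
    rw [List.perm_middle.dedup.length_eq, List.dedup_cons_of_mem hx]
  have hle := (List.dedup_sublist (l₁ ++ l₂)).length_le
  simp only [repStat, hdedup, List.length_append, List.length_cons] at hle ⊢
  omega

theorem List.countP_range_of_iff {P : ℕ → Bool} {n k : ℕ} (hk : k ≤ n)
    (hP : ∀ i < n, P i ↔ i < k) : (List.range n).countP P = k := by
  obtain ⟨d, rfl⟩ := Nat.exists_eq_add_of_le hk
  rw [List.range_add, List.countP_append, List.countP_map,
    List.countP_eq_length.mpr fun i hi =>
      (hP i ((List.mem_range.mp hi).trans_le hk)).mpr (List.mem_range.mp hi),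
    List.countP_eq_zero.mpr fun i hi => by
      simp [hP (k + i) (by have := List.mem_range.mp hi; omega)]]
  simp

namespace IsAscSeq

variable {s : List ℕ}

theorem getD_le (h : IsAscSeq s) {i : ℕ} (hi : i < s.length) : s.getD i 0 ≤ i := by
  have hb := h i hi
  have hasc := ascStat_le (s.take i)
  split_ifs at hb
  · omega
  · simp only [List.length_take] at hasc
    omega

theorem getD_eq_self_of_le (h : IsAscSeq s) {i j : ℕ} (hi : i < s.length)
    (hsi : s.getD i 0 = i) (hji : j ≤ i) : s.getD j 0 = j := by
  rcases hji.eq_or_lt with rfl | hji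
  · exact hsi
  have hb := h i hi
  rw [if_neg (by omega), hsi] at hb
  have hasc := ascStat_le (s.take i)
  have hlen : (s.take i).length = i := by simp only [List.length_take]; omega
  -- all `i - 1` steps of `s.take i` are ascents, so it increases strictly from `s₀ = 0`
  have hinc := le_getD_of_ascStat_eq (l := s.take i) (by omega) j (by omega)
  simp only [List.getD_eq_getElem?_getD, List.getElem?_take, hji, if_true,
    show 0 < i by omega] at hinc
  have h0 := h.getD_le (i := 0) (by omega)
  have hj := h.getD_le (i := j) (by omega)
  simp only [List.getD_eq_getElem?_getD] at h0 hj ⊢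
  omega

theorem maxStat_eq (h : IsAscSeq s) {k : ℕ} (hk : k ≤ s.length) (hlt : ∀ i < k, s.getD i 0 = i)
    (hk' : k < s.length → s.getD k 0 ≠ k) : maxStat s = k :=
  List.countP_range_of_iff hk fun i hi => by
    rw [decide_eq_true_iff]
    refine ⟨fun hsi => ?_, hlt i⟩
    by_contra hki
    exact hk' (by omega) (h.getD_eq_self_of_le hi hsi (by omega))

theorem getD_eq_self_iff (h : IsAscSeq s) {i : ℕ} (hi : i < s.length) :
    s.getD i 0 = i ↔ i < maxStat s := by
  classical
  have hex : ∃ k, s.length ≤ k ∨ s.getD k 0 ≠ k := ⟨_, Or.inl le_rfl⟩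
  have hfind : ∀ i < Nat.find hex, s.getD i 0 = i := fun i hi =>
    not_not.mp (not_or.mp (Nat.find_min hex hi)).2
  have hmax : maxStat s = Nat.find hex :=
    h.maxStat_eq (Nat.find_min' hex (Or.inl le_rfl)) hfind
      fun hk => (Nat.find_spec hex).resolve_left (by omega)
  rw [hmax]
  refine ⟨fun hsi => ?_, hfind i⟩
  by_contra hle
  exact (Nat.find_spec hex).elim (by omega) (· (h.getD_eq_self_of_le hi hsi (by omega)))

theorem eq_range_append (h : IsAscSeq s) (hm : maxStat s + 1 < s.length) :
    ∃ e f b, e < maxStat s ∧ s = List.range (maxStat s) ++ e :: f :: b := by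
  set m := maxStat s
  have htake : s.take m = List.range m := List.ext_getElem
    (by simp only [List.length_take, List.length_range]; omega) fun i _ hi => by
    simp only [List.length_range] at hi
    rw [List.getElem_take, List.getElem_range, ← List.getD_eq_getElem s 0,
      (h.getD_eq_self_iff (by omega)).mpr hi]
  refine ⟨s[m], s[m + 1], s.drop (m + 2), ?_, ?_⟩
  · have hle := h.getD_le (i := m) (by omega)
    have hne := (h.getD_eq_self_iff (i := m) (by omega)).not.mpr (lt_irrefl m)
    rw [List.getD_eq_getElem _ _ (by omega)] at hle hne
    omega
  · conv_lhs => rw [← List.take_append_drop m s, List.drop_eq_getElem_cons (by omega),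
      List.drop_eq_getElem_cons (by omega), htake]

theorem append_cons_of_append_cons_cons {u v : List ℕ} {x y : ℕ}
    (h : IsAscSeq (u ++ x :: y :: v)) (hyx : y ≤ x) (hxu : ∀ a ∈ u.getLast?, x ≤ a) :
    IsAscSeq (u ++ y :: v) := by
  intro i hi
  simp only [List.length_append, List.length_cons] at hi
  rcases lt_trichotomy i u.length with hiu | rfl | hiu
  · have := h i (by simp only [List.length_append, List.length_cons]; omega)
    rwa [List.getD_append _ _ _ _ hiu, List.take_append_of_le_length hiu.le] at this ⊢
  · have hx := h u.length (by simp)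
    rw [List.getD_append_right _ _ _ _ le_rfl, Nat.sub_self, List.getD_cons_zero,
      List.take_left] at hx ⊢
    exact hyx.trans hx
  · have htake (w : List ℕ) (k : ℕ) : (u ++ w).take (u.length + k) = u ++ w.take k := by
      simp [List.take_append]
    have hget (w : List ℕ) (k : ℕ) : (u ++ w).getD (u.length + k) 0 = w.getD k 0 := by
      rw [List.getD_append_right _ _ _ _ (by omega), Nat.add_sub_cancel_left]
    obtain ⟨j, rfl⟩ : ∃ j, i = u.length + (j + 1) := ⟨i - u.length - 1, by omega⟩
    have := h (u.length + (j + 1 + 1)) (by simp only [List.length_append, List.length_cons]; omega)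
    simp only [htake, hget, List.take_succ_cons, List.getD_cons_succ,
      ascStat_append_cons_cons_of_le _ _ hyx hxu] at this ⊢
    simpa using this

end IsAscSeq

theorem remove_ealm_entry_general (n : ℕ) (s : List ℕ) (hlen : s.length = n)
    (h : IsAscSeq s) (h2 : maxStat s + 1 < n)
    (h3 : s.getD (maxStat s + 1) 0 ≤ s.getD (maxStat s) 0) :
    IsAscSeq (s.eraseIdx (maxStat s)) ∧
    (s.eraseIdx (maxStat s)).length = n - 1 ∧
    ascStat (s.eraseIdx (maxStat s)) = ascStat s ∧
    maxStat (s.eraseIdx (maxStat s)) = maxStat s ∧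
    rminStat (s.eraseIdx (maxStat s)) = rminStat s ∧
    repStat (s.eraseIdx (maxStat s)) = repStat s - 1 ∧
    zeroStat s = zeroStat (s.eraseIdx (maxStat s)) +
      (if s.getD (maxStat s) 0 = 0 then 1 else 0) := by
  subst hlen
  obtain ⟨e, f, b, hem, hs⟩ := h.eq_range_append h2
  generalize maxStat s = m at *
  subst hs
  have hfe : f ≤ e := by simpa using h3
  have hlast : ∀ a ∈ (List.range m).getLast?, e ≤ a := by
    rw [List.getLast?_range, if_neg (by omega)]
    rintro a ⟨⟩
    omega
  have herase : (List.range m ++ e :: f :: b).eraseIdx m = List.range m ++ f :: b := by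
    simp [List.eraseIdx_append_of_length_le]
  have ht := h.append_cons_of_append_cons_cons hfe hlast
  rw [herase]
  refine ⟨ht, by simp, (ascStat_append_cons_cons_of_le _ _ hfe hlast).symm, ?_,
    (rminStat_append_cons_cons_of_le _ _ hfe).symm, ?_, ?_⟩
  · refine ht.maxStat_eq (by simp) (fun i hi => ?_) fun _ => by simpa using (hfe.trans_lt hem).ne
    rw [List.getD_append _ _ _ _ (by simpa), List.getD_eq_getElem _ _ (by simpa),
      List.getElem_range]
  · rw [repStat_append_cons_of_mem (l₂ := f :: b) (by simp [hem]), Nat.add_sub_cancel]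
  · rw [show (List.range m ++ e :: f :: b).getD m 0 = e by simp]
    simp only [zeroStat, List.count_append, List.count_cons, beq_iff_eq]
    omega

/-- Removing the entry right after the last maximal entry (position max(s),
0-indexed), when it weakly dominates the next entry, yields an ascent
sequence of length n−1 with the stated statistics. -/
theorem remove_ealm_entry (n : ℕ) (s : List ℕ) (hlen : s.length = n)
    (h : IsAscSeq s) (h1 : maxStat s < n) (h2 : maxStat s + 1 < n)
    (h3 : s.getD (maxStat s + 1) 0 ≤ s.getD (maxStat s) 0) :
    IsAscSeq (s.eraseIdx (maxStat s)) ∧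
    (s.eraseIdx (maxStat s)).length = n - 1 ∧
    ascStat (s.eraseIdx (maxStat s)) = ascStat s ∧
    maxStat (s.eraseIdx (maxStat s)) = maxStat s ∧
    rminStat (s.eraseIdx (maxStat s)) = rminStat s ∧
    repStat (s.eraseIdx (maxStat s)) = repStat s - 1 ∧
    zeroStat s = zeroStat (s.eraseIdx (maxStat s)) +
      (if s.getD (maxStat s) 0 = 0 then 1 else 0) :=
  remove_ealm_entry_general n s hlen h h2 h3
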